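/- For every n ≥ 2, the list-distinguishing chromatic number of the friendship graph F_n equals 1 + ⌈(1+√(8n+1))/2⌉, and this also equals its distinguishing chromatic number χ_D(F_n). -/

import Mathlib

open SimpleGraph

/-- `f` is a proper coloring of `G` preserved by no nontrivial automorphism of `G`. -/
def IsProperDistinguishing {V : Type*} (G : SimpleGraph V) (f : V → ℕ) : Prop :=
  (∀ ⦃u w : V⦄, G.Adj u w → f u ≠ f w) ∧
    ∀ φ : G ≃g G, (∀ v, f (φ v) = f v) → ∀ v, φ v = v

/-- `G` is properly `L`-distinguishable for every list assignment with all lists of size `k`. -/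
def ProperlyListDistinguishable {V : Type*} (G : SimpleGraph V) (k : ℕ) : Prop :=
  ∀ L : V → Finset ℕ, (∀ v, (L v).card = k) →
    ∃ f : V → ℕ, (∀ v, f v ∈ L v) ∧ IsProperDistinguishing G f

/-- The list-distinguishing chromatic number `χ_{D_L}(G)`. -/
noncomputable def listDistChromNum {V : Type*} (G : SimpleGraph V) : ℕ :=
  sInf {k | ProperlyListDistinguishable G k}
/-- The distinguishing chromatic number `χ_D(G)`: the least `r` such that `G` has a proper
coloring with `r` colors preserved by no nontrivial automorphism. -/
noncomputable def distChromNum {V : Type*} (G : SimpleGraph V) : ℕ :=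
  sInf {r | ∃ f : V → Fin r, (∀ ⦃u w : V⦄, G.Adj u w → f u ≠ f w) ∧
    ∀ φ : G ≃g G, (∀ v, f (φ v) = f v) → ∀ v, φ v = v}


/-- The friendship graph `F_n`: `n` triangles glued at a common central vertex (`none`). -/
def friendshipGraph (n : ℕ) : SimpleGraph (Option (Fin n × Fin 2)) where
  Adj x y := x ≠ y ∧
    (x = none ∨ y = none ∨ ∃ (i : Fin n) (a b : Fin 2), x = some (i, a) ∧ y = some (i, b))
  symm := by
    constructor
    rintro x y ⟨hne, h | h | ⟨i, a, b, rfl, rfl⟩⟩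
    · exact ⟨hne.symm, Or.inr (Or.inl h)⟩
    · exact ⟨hne.symm, Or.inl h⟩
    · exact ⟨hne.symm, Or.inr (Or.inr ⟨i, b, a, rfl, rfl⟩)⟩
  loopless := by constructor; rintro x ⟨hne, -⟩; exact hne rfl


noncomputable def sval (n : ℕ) : ℕ := ⌈(1 + Real.sqrt (8 * n + 1)) / 2⌉₊

lemma s_ge_three {n : ℕ} (hn : 2 ≤ n) : 3 ≤ sval n := by
  have h9 : (3:ℝ) < Real.sqrt (8*(n:ℝ)+1) := by
    rw [show (3:ℝ) = Real.sqrt 9 by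
      rw [show (9:ℝ) = 3^2 by norm_num, Real.sqrt_sq (by norm_num)]]
    apply Real.sqrt_lt_sqrt (by norm_num)
    have : (2:ℝ) ≤ n := by exact_mod_cast hn
    nlinarith
  have h2 : (2:ℝ) < (1 + Real.sqrt (8*(n:ℝ)+1))/2 := by linarith
  have h3 := (Nat.lt_ceil (n := 2)).mpr h2
  unfold sval; omega

lemma n_le_choose {n : ℕ} (hn : 2 ≤ n) : n ≤ (sval n).choose 2 := by
  set s := sval n with hs
  have hs3 : 3 ≤ s := s_ge_three hn
  have h1 : ((1 + Real.sqrt (8*(n:ℝ)+1))/2 : ℝ) ≤ s := Nat.le_ceil _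
  have hsq : Real.sqrt (8*(n:ℝ)+1) ≤ 2*(s:ℝ) - 1 := by linarith
  have h2 : (8*(n:ℝ)+1) ≤ (2*(s:ℝ)-1)^2 := by
    have := Real.sq_sqrt (x := 8*(n:ℝ)+1) (by positivity)
    calc (8*(n:ℝ)+1) = Real.sqrt (8*(n:ℝ)+1) ^ 2 := this.symm
    _ ≤ (2*(s:ℝ)-1)^2 := by
        apply pow_le_pow_left₀ (Real.sqrt_nonneg _) hsq
  have hs1 : 1 ≤ s := by omega
  have key : 2*n ≤ s*(s-1) := by
    have : ((2*n:ℕ):ℝ) ≤ ((s*(s-1):ℕ):ℝ) := by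
      push_cast [Nat.cast_sub hs1]
      nlinarith
    exact_mod_cast this
  rw [Nat.choose_two_right]
  rw [Nat.le_div_iff_mul_le (by norm_num)]
  omega

lemma choose_lt {n : ℕ} (hn : 2 ≤ n) : (sval n - 1).choose 2 < n := by
  set s := sval n with hs
  have hs3 : 3 ≤ s := s_ge_three hn
  have h1 : ((s:ℝ) - 1) < (1 + Real.sqrt (8*(n:ℝ)+1))/2 := by
    have hnotle : ¬ (sval n ≤ s - 1) := by omega
    unfold sval at hnotle
    rw [Nat.ceil_le] at hnotle
    push_neg at hnotle
    have : ((s-1:ℕ):ℝ) = (s:ℝ) - 1 := by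
      push_cast [Nat.cast_sub (by omega : 1 ≤ s)]; ring
    linarith [this ▸ hnotle]
  have hsq : 2*(s:ℝ) - 3 < Real.sqrt (8*(n:ℝ)+1) := by linarith
  have h2 : (2*(s:ℝ)-3)^2 < 8*(n:ℝ)+1 := by
    rw [← Real.lt_sqrt (by
      have : (3:ℝ) ≤ s := by exact_mod_cast hs3
      linarith)]
    exact hsq
  have key : (s-1)*(s-2) < 2*n := by
    have : (((s-1)*(s-2):ℕ):ℝ) < ((2*n:ℕ):ℝ) := by
      push_cast [Nat.cast_sub (by omega : 1 ≤ s), Nat.cast_sub (by omega : 2 ≤ s)]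
      nlinarith
    exact_mod_cast this
  rw [Nat.choose_two_right]
  rw [Nat.div_lt_iff_lt_mul (by norm_num)]
  have : s - 1 - 1 = s - 2 := by omega
  rw [this]; omega

namespace FG
variable {n : ℕ}

lemma adj_none (p : Fin n × Fin 2) : (friendshipGraph n).Adj none (some p) :=
  ⟨by simp, Or.inl rfl⟩

lemma adj_some_iff {i j : Fin n} {a b : Fin 2} :
    (friendshipGraph n).Adj (some (i,a)) (some (j,b)) ↔ i = j ∧ a ≠ b := by
  constructor
  · rintro ⟨hne, h | h | ⟨i', a', b', h1, h2⟩⟩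
    · exact absurd h (by simp)
    · exact absurd h (by simp)
    · simp only [Option.some.injEq, Prod.mk.injEq] at h1 h2
      obtain ⟨rfl, rfl⟩ := h1
      obtain ⟨rfl, rfl⟩ := h2
      exact ⟨rfl, fun hab => hne (by rw [hab])⟩
  · rintro ⟨rfl, hab⟩
    exact ⟨by simp [hab], Or.inr (Or.inr ⟨i, a, b, rfl, rfl⟩)⟩

lemma fin2_cases : ∀ a b : Fin 2, a ≠ b → (a = 0 ∧ b = 1) ∨ (a = 1 ∧ b = 0) := by decide

/-- the automorphism of the friendship graph from a permutation of triangles and flips -/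
def autOf (σ : Equiv.Perm (Fin n)) (τ : Fin n → Equiv.Perm (Fin 2)) :
    friendshipGraph n ≃g friendshipGraph n where
  toFun := Option.map fun p => (σ p.1, τ p.1 p.2)
  invFun := Option.map fun p => (σ.symm p.1, (τ (σ.symm p.1)).symm p.2)
  left_inv := by rintro (_|⟨i,a⟩) <;> simp
  right_inv := by rintro (_|⟨i,a⟩) <;> simp
  map_rel_iff' := by
    rintro (_|⟨i,a⟩) (_|⟨j,b⟩)
    · simp [friendshipGraph]
    · simpa using ⟨fun _ => adj_none _, fun _ => adj_none _⟩
    · constructor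
      · intro h; exact ((friendshipGraph n).adj_symm (adj_none _))
      · intro _; exact ((friendshipGraph n).adj_symm (adj_none _))
    · simp only [Equiv.coe_fn_mk, Option.map_some]
      rw [adj_some_iff, adj_some_iff]
      constructor
      · rintro ⟨h1, h2⟩
        have hij : i = j := σ.injective h1
        subst hij
        exact ⟨rfl, fun hab => h2 (by rw [hab])⟩
      · rintro ⟨rfl, hab⟩
        exact ⟨rfl, fun h => hab ((τ i).injective h)⟩

lemma fin2_cases' : ∀ x : Fin 2, x = 0 ∨ x = 1 := by decide

lemma fin2_other : ∀ a b : Fin 2, b ≠ a → b = 1 - a := by decide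

lemma phi_none (hn : 2 ≤ n) (φ : friendshipGraph n ≃g friendshipGraph n) :
    φ none = none := by
  by_contra hne0
  obtain ⟨⟨i, a⟩, hia⟩ : ∃ p, φ none = some p := by
    cases h : φ none with
    | none => exact absurd h hne0
    | some p => exact ⟨p, rfl⟩
  have key : ∀ p : Fin n × Fin 2,
      φ (some p) = none ∨ φ (some p) = some (i, 1 - a) := by
    intro p
    have hadj : (friendshipGraph n).Adj (φ none) (φ (some p)) :=
      φ.map_rel_iff.mpr (adj_none p)
    rw [hia] at hadj
    obtain ⟨hne, h | h | ⟨i', a', b', h1, h2⟩⟩ := hadj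
    · exact absurd h (by simp)
    · exact Or.inl h
    · simp only [Option.some.injEq, Prod.mk.injEq] at h1
      obtain ⟨rfl, rfl⟩ := h1
      have hb : b' ≠ a := fun hb => hne (by rw [h2, hb])
      rw [fin2_other a b' hb] at h2
      exact Or.inr h2
  have hinj : Function.Injective φ := φ.injective
  set p1 : Fin n × Fin 2 := (⟨0, by omega⟩, 0) with hp1
  set p2 : Fin n × Fin 2 := (⟨0, by omega⟩, 1) with hp2
  set p3 : Fin n × Fin 2 := (⟨1, by omega⟩, 0) with hp3
  have hne12 : (some p1 : Option (Fin n × Fin 2)) ≠ some p2 := by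
    simp [hp1, hp2, Prod.ext_iff]
  have hne13 : (some p1 : Option (Fin n × Fin 2)) ≠ some p3 := by
    simp [hp1, hp3, Prod.ext_iff, Fin.ext_iff]
  have hne23 : (some p2 : Option (Fin n × Fin 2)) ≠ some p3 := by
    simp [hp2, hp3, Prod.ext_iff, Fin.ext_iff]
  obtain h1 | h1 := key p1 <;> obtain h2 | h2 := key p2 <;> obtain h3 | h3 := key p3
  all_goals first
    | exact hne12 (hinj (h1.trans h2.symm))
    | exact hne13 (hinj (h1.trans h3.symm))
    | exact hne23 (hinj (h2.trans h3.symm))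


lemma pair_eq {a b c d : ℕ} (hab : a ≠ b) (h : ({a, b} : Finset ℕ) = {c, d}) :
    (a = c ∧ b = d) ∨ (a = d ∧ b = c) := by
  have ha : a ∈ ({c, d} : Finset ℕ) := h ▸ (by simp)
  have hb : b ∈ ({c, d} : Finset ℕ) := h ▸ (by simp)
  have hc : c ∈ ({a, b} : Finset ℕ) := h ▸ (by simp)
  have hd : d ∈ ({a, b} : Finset ℕ) := h ▸ (by simp)
  simp only [Finset.mem_insert, Finset.mem_singleton] at ha hb hc hd
  rcases ha with rfl | rfl <;> rcases hb with rfl | rfl <;> tauto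

lemma pair_injective (hn : 2 ≤ n) {f : Option (Fin n × Fin 2) → ℕ}
    (hf : IsProperDistinguishing (friendshipGraph n) f) :
    Function.Injective
      (fun i : Fin n => ({f (some (i,0)), f (some (i,1))} : Finset ℕ)) := by
  intro i j h
  by_contra hij
  simp only at h
  have hab : f (some (i,0)) ≠ f (some (i,1)) :=
    hf.1 (adj_some_iff.mpr ⟨rfl, by decide⟩)
  -- build the swapping automorphism
  rcases pair_eq hab h with ⟨h1, h2⟩ | ⟨h1, h2⟩
  · -- same orientation: swap triangles i and j with no flip
    set φ := autOf (n := n) (Equiv.swap i j) (fun _ => 1) with hφ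
    have hpres : ∀ v, f (φ v) = f v := by
      rintro (_ | ⟨k, x⟩)
      · rfl
      · show f (some (Equiv.swap i j k, x)) = f (some (k, x))
        rcases eq_or_ne k i with rfl | hki
        · rw [Equiv.swap_apply_left]
          rcases fin2_cases' x with rfl | rfl
          · exact h1.symm
          · exact h2.symm
        · rcases eq_or_ne k j with rfl | hkj
          · rw [Equiv.swap_apply_right]
            rcases fin2_cases' x with rfl | rfl
            · exact h1
            · exact h2
          · rw [Equiv.swap_apply_of_ne_of_ne hki hkj]
    have h0 := hf.2 φ hpres (some (i, 0))
    have h' : some ((Equiv.swap i j) i, (0:Fin 2)) = some (i, (0:Fin 2)) := h0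
    rw [Equiv.swap_apply_left] at h'
    simp only [Option.some.injEq, Prod.mk.injEq] at h'
    exact hij h'.1.symm
  · -- opposite orientation: swap triangles i and j with a flip
    set c : Equiv.Perm (Fin 2) := Equiv.swap 0 1 with hc
    set φ := autOf (n := n) (Equiv.swap i j)
      (fun k => if k = i ∨ k = j then c else 1) with hφ
    have hpres : ∀ v, f (φ v) = f v := by
      rintro (_ | ⟨k, x⟩)
      · rfl
      · show f (some (Equiv.swap i j k,
          (if k = i ∨ k = j then c else 1) x)) = f (some (k, x))
        rcases eq_or_ne k i with rfl | hki
        · rw [Equiv.swap_apply_left, if_pos (Or.inl rfl)]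
          rcases fin2_cases' x with rfl | rfl
          · show f (some (j, c 0)) = _
            rw [show c 0 = 1 from rfl]
            exact h1.symm
          · show f (some (j, c 1)) = _
            rw [show c 1 = 0 from rfl]
            exact h2.symm
        · rcases eq_or_ne k j with rfl | hkj
          · rw [Equiv.swap_apply_right, if_pos (Or.inr rfl)]
            rcases fin2_cases' x with rfl | rfl
            · show f (some (i, c 0)) = _
              rw [show c 0 = 1 from rfl]
              exact h2
            · show f (some (i, c 1)) = _
              rw [show c 1 = 0 from rfl]
              exact h1
          · rw [Equiv.swap_apply_of_ne_of_ne hki hkj, if_neg (by tauto)]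
            rfl
    have := hf.2 φ hpres (some (i, 0))
    have h' : some ((Equiv.swap i j) i,
        (if i = i ∨ i = j then c else 1) (0:Fin 2)) = some (i, (0:Fin 2)) := this
    rw [Equiv.swap_apply_left] at h'
    simp only [Option.some.injEq, Prod.mk.injEq] at h'
    exact hij h'.1.symm

lemma card_bound (hn : 2 ≤ n) {f : Option (Fin n × Fin 2) → ℕ}
    (hf : IsProperDistinguishing (friendshipGraph n) f) {r : ℕ}
    (hr : ∀ v, f v ∈ Finset.range r) : n ≤ (r - 1).choose 2 := by
  classical
  set T : Finset ℕ := (Finset.range r).erase (f none) with hT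
  have hTcard : T.card = r - 1 := by
    rw [hT, Finset.card_erase_of_mem (hr none), Finset.card_range]
  have hmaps : ∀ i : Fin n,
      ({f (some (i,0)), f (some (i,1))} : Finset ℕ) ∈ T.powersetCard 2 := by
    intro i
    rw [Finset.mem_powersetCard]
    constructor
    · intro x hx
      simp only [Finset.mem_insert, Finset.mem_singleton] at hx
      rcases hx with rfl | rfl <;>
        exact Finset.mem_erase.mpr
          ⟨hf.1 ((friendshipGraph n).adj_symm (adj_none _)), hr _⟩
    · exact Finset.card_pair (hf.1 (adj_some_iff.mpr ⟨rfl, by decide⟩))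
  have hcard := Finset.card_le_card_of_injOn (s := (Finset.univ : Finset (Fin n)))
      (fun i : Fin n => ({f (some (i,0)), f (some (i,1))} : Finset ℕ))
      (fun i _ => hmaps i) ((pair_injective hn hf).injOn)
  rwa [Finset.card_univ, Fintype.card_fin, Finset.card_powersetCard, hTcard] at hcard



lemma choose_arith' : ∀ d t : ℕ, (t + d).choose 2 ≤ t.choose 2 + d * (t + d) := by
  intro d
  induction d with
  | zero => simp
  | succ d ih =>
    intro t
    have h1 := ih (t + 1)
    have h2 : (t + 1).choose 2 = t.choose 2 + t := by
      rw [Nat.choose_succ_succ]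
      simp [Nat.choose_one_right, Nat.add_comm]
    have h3 : t + 1 + d = t + (d + 1) := by omega
    rw [h3, h2] at h1
    nlinarith

lemma choose_arith {s t : ℕ} (h : t ≤ s) : s.choose 2 ≤ t.choose 2 + (s - t) * s := by
  have := choose_arith' (s - t) t
  rw [show t + (s - t) = s by omega] at this
  exact this

lemma pairs_card {A B : Finset ℕ} {s : ℕ} (hA : s ≤ A.card) (hB : s ≤ B.card) :
    s.choose 2 ≤ (((A ×ˢ B).filter fun p => p.1 ≠ p.2).image
      fun p => ({p.1, p.2} : Finset ℕ)).card := by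
  classical
  set P := (((A ×ˢ B).filter fun p => p.1 ≠ p.2).image
      fun p => ({p.1, p.2} : Finset ℕ)) with hP
  -- doubletons from a subset of A ∩ B are in P
  have hsub : ∀ C : Finset ℕ, C ⊆ A ∩ B → C.powersetCard 2 ⊆ P := by
    intro C hC t ht
    rw [Finset.mem_powersetCard] at ht
    obtain ⟨x, y, hxy, rfl⟩ := Finset.card_eq_two.mp ht.2
    have hx : x ∈ A ∩ B := hC (ht.1 (by simp))
    have hy : y ∈ A ∩ B := hC (ht.1 (by simp))
    rw [Finset.mem_image]
    refine ⟨(x, y), ?_, rfl⟩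
    rw [Finset.mem_filter, Finset.mem_product]
    exact ⟨⟨(Finset.mem_inter.mp hx).1, (Finset.mem_inter.mp hy).2⟩, hxy⟩
  by_cases hcase : s ≤ (A ∩ B).card
  · obtain ⟨C, hC, hCcard⟩ := Finset.exists_subset_card_eq hcase
    calc s.choose 2 = (C.powersetCard 2).card := by
          rw [Finset.card_powersetCard, hCcard]
    _ ≤ P.card := Finset.card_le_card (hsub C hC)
  · push_neg at hcase
    set t := (A ∩ B).card with htdef
    have ht : t ≤ s := le_of_lt hcase
    -- doubletons {d, b} with d ∈ A \ B, b ∈ B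
    have hDcard : s - t ≤ (A \ B).card := by
      have := Finset.card_sdiff_add_card_inter A B
      omega
    obtain ⟨D, hD, hDc⟩ := Finset.exists_subset_card_eq hDcard
    obtain ⟨B', hB', hB'c⟩ := Finset.exists_subset_card_eq hB
    set Q1 := ((A ∩ B).powersetCard 2) with hQ1
    set Q2 := ((D ×ˢ B').image fun p => ({p.1, p.2} : Finset ℕ)) with hQ2
    have hQ1P : Q1 ⊆ P := hsub _ (le_refl _)
    have hQ2P : Q2 ⊆ P := by
      intro u hu
      rw [hQ2, Finset.mem_image] at hu
      obtain ⟨⟨d, b⟩, hdb, rfl⟩ := hu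
      rw [Finset.mem_product] at hdb
      have hdA : d ∈ A := (Finset.mem_sdiff.mp (hD hdb.1)).1
      have hdB : d ∉ B := (Finset.mem_sdiff.mp (hD hdb.1)).2
      have hbB : b ∈ B := hB' hdb.2
      rw [Finset.mem_image]
      refine ⟨(d, b), ?_, rfl⟩
      rw [Finset.mem_filter, Finset.mem_product]
      exact ⟨⟨hdA, hbB⟩, fun h => hdB (by simp only at h; rw [h]; exact hbB)⟩
    have hQ2card : Q2.card = (s - t) * s := by
      rw [hQ2, Finset.card_image_of_injOn, Finset.card_product, hDc, hB'c]
      rintro ⟨d, b⟩ hdb ⟨d', b'⟩ hdb' heq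
      simp only [Finset.mem_coe, Finset.mem_product] at hdb hdb'
      have hdB : d ∉ B := (Finset.mem_sdiff.mp (hD hdb.1)).2
      have hd'B : d' ∉ B := (Finset.mem_sdiff.mp (hD hdb'.1)).2
      have hbB : b ∈ B := hB' hdb.2
      have hb'B : b' ∈ B := hB' hdb'.2
      simp only at heq
      have hd : d ∈ ({d', b'} : Finset ℕ) := heq ▸ (by simp)
      have hb : b ∈ ({d', b'} : Finset ℕ) := heq ▸ (by simp)
      simp only [Finset.mem_insert, Finset.mem_singleton] at hd hb
      have hdd' : d = d' := by
        rcases hd with h | h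
        · exact h
        · exact absurd (show d ∈ B from h ▸ hb'B) hdB
      have hbb' : b = b' := by
        rcases hb with h | h
        · exact absurd (show d' ∈ B from h ▸ hbB) hd'B
        · exact h
      simp [hdd', hbb']
    have hdisj : Disjoint Q1 Q2 := by
      rw [Finset.disjoint_left]
      intro u hu1 hu2
      rw [hQ1, Finset.mem_powersetCard] at hu1
      rw [hQ2, Finset.mem_image] at hu2
      obtain ⟨⟨d, b⟩, hdb, rfl⟩ := hu2
      rw [Finset.mem_product] at hdb
      have hdB : d ∉ B := (Finset.mem_sdiff.mp (hD hdb.1)).2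
      have : d ∈ A ∩ B := hu1.1 (by simp)
      exact hdB (Finset.mem_inter.mp this).2
    calc s.choose 2 ≤ t.choose 2 + (s - t) * s := choose_arith ht
    _ = Q1.card + Q2.card := by
        rw [hQ2card, hQ1, Finset.card_powersetCard, htdef]
    _ = (Q1 ∪ Q2).card := (Finset.card_union_of_disjoint hdisj).symm
    _ ≤ P.card := Finset.card_le_card (Finset.union_subset hQ1P hQ2P)


variable {n : ℕ}
open Finset

lemma exists_inj_choice {α : Type*} [DecidableEq α] {n : ℕ} (P : Fin n → Finset α)
    (h : ∀ i, n ≤ (P i).card) :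
    ∃ g : Fin n → α, Function.Injective g ∧ ∀ i, g i ∈ P i := by
  rw [← Finset.all_card_le_biUnion_card_iff_exists_injective]
  intro S
  rcases S.eq_empty_or_nonempty with rfl | ⟨i, hi⟩
  · simp
  · have h1 : S.card ≤ n := by simpa using Finset.card_le_univ S
    have h2 : (P i).card ≤ (S.biUnion P).card :=
      Finset.card_le_card (Finset.subset_biUnion_of_mem P hi)
    exact le_trans h1 (le_trans (h i) h2)

lemma upper (hn : 2 ≤ n) :
    ProperlyListDistinguishable (friendshipGraph n) (sval n + 1) := by
  classical
  intro L hL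
  set s := sval n with hs
  have hc0 : (L none).Nonempty := Finset.card_pos.mp (by rw [hL]; omega)
  obtain ⟨c0, hc0mem⟩ := hc0
  set A : Fin n → Finset ℕ := fun i => (L (some (i, 0))).erase c0 with hA
  set B : Fin n → Finset ℕ := fun i => (L (some (i, 1))).erase c0 with hB
  have hAcard : ∀ i, s ≤ (A i).card := fun i => by
    have := Finset.pred_card_le_card_erase (s := L (some (i, 0))) (a := c0)
    rw [hL] at this; simp only [hA]; omega
  have hBcard : ∀ i, s ≤ (B i).card := fun i => by
    have := Finset.pred_card_le_card_erase (s := L (some (i, 1))) (a := c0)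
    rw [hL] at this; simp only [hB]; omega
  set P : Fin n → Finset (Finset ℕ) := fun i =>
    ((A i ×ˢ B i).filter fun p => p.1 ≠ p.2).image
      fun p => ({p.1, p.2} : Finset ℕ) with hPdef
  have hPcard : ∀ i, n ≤ (P i).card := by
    intro i
    have h1 : n ≤ s.choose 2 := n_le_choose hn
    exact le_trans h1 (pairs_card (hAcard i) (hBcard i))
  obtain ⟨g, hginj, hgmem⟩ := exists_inj_choice P hPcard
  have hchoice : ∀ i, ∃ a b : ℕ, a ∈ A i ∧ b ∈ B i ∧ a ≠ b ∧
      ({a, b} : Finset ℕ) = g i := by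
    intro i
    have := hgmem i
    rw [hPdef, Finset.mem_image] at this
    obtain ⟨⟨a, b⟩, hab, habg⟩ := this
    rw [Finset.mem_filter, Finset.mem_product] at hab
    exact ⟨a, b, hab.1.1, hab.1.2, hab.2, habg⟩
  choose a b hamem hbmem hab hpair using hchoice
  set f : Option (Fin n × Fin 2) → ℕ := fun v =>
    match v with
    | none => c0
    | some (i, x) => if x = 0 then a i else b i with hf
  have hf0 : ∀ i, f (some (i, 0)) = a i := fun i => rfl
  have hf1 : ∀ i, f (some (i, 1)) = b i := fun i => rfl
  have hane : ∀ i, a i ≠ c0 := fun i => Finset.ne_of_mem_erase (hamem i)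
  have hbne : ∀ i, b i ≠ c0 := fun i => Finset.ne_of_mem_erase (hbmem i)
  refine ⟨f, ?_, ?_, ?_⟩
  · rintro (_ | ⟨i, x⟩)
    · exact hc0mem
    · rcases fin2_cases' x with rfl | rfl
      · exact Finset.mem_of_mem_erase (hamem i)
      · exact Finset.mem_of_mem_erase (hbmem i)
  · -- properness
    rintro (_ | ⟨i, x⟩) (_ | ⟨j, y⟩) hadj
    · exact absurd rfl hadj.1
    · rcases fin2_cases' y with rfl | rfl
      · exact fun h => hane j h.symm
      · exact fun h => hbne j h.symm
    · rcases fin2_cases' x with rfl | rfl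
      · exact fun h => hane i h
      · exact fun h => hbne i h
    · obtain ⟨rfl, hxy⟩ := adj_some_iff.mp hadj
      rcases fin2_cases x y hxy with ⟨rfl, rfl⟩ | ⟨rfl, rfl⟩
      · exact hab i
      · exact fun h => hab i h.symm
  · -- rigidity
    intro φ hpres
    have h0 : φ none = none := phi_none hn φ
    have himg : ∀ p : Fin n × Fin 2, ∃ q, φ (some p) = some q := by
      intro p
      cases hq : φ (some p) with
      | none =>
        exact absurd (φ.injective (hq.trans h0.symm)) (by simp)
      | some q => exact ⟨q, rfl⟩
    have key : ∀ i : Fin n, φ (some (i, 0)) = some (i, 0) ∧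
        φ (some (i, 1)) = some (i, 1) := by
      intro i
      obtain ⟨⟨j0, y0⟩, hq0⟩ := himg (i, 0)
      obtain ⟨⟨j1, y1⟩, hq1⟩ := himg (i, 1)
      have hadj : (friendshipGraph n).Adj (some (j0, y0)) (some (j1, y1)) := by
        rw [← hq0, ← hq1]
        exact φ.map_rel_iff.mpr (adj_some_iff.mpr ⟨rfl, by decide⟩)
      obtain ⟨rfl, hy⟩ := adj_some_iff.mp hadj
      have hv0 : f (some (j0, y0)) = a i := by rw [← hq0, hpres, hf0]
      have hv1 : f (some (j0, y1)) = b i := by rw [← hq1, hpres, hf1]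
      rcases fin2_cases y0 y1 hy with ⟨rfl, rfl⟩ | ⟨rfl, rfl⟩
      · -- y0 = 0, y1 = 1
        rw [hf0] at hv0; rw [hf1] at hv1
        have : g j0 = g i := by
          rw [← hpair j0, ← hpair i, hv0, hv1]
        have hji : j0 = i := hginj this
        subst hji
        exact ⟨hq0, hq1⟩
      · -- y0 = 1, y1 = 0 : contradiction
        rw [hf1] at hv0; rw [hf0] at hv1
        have : g j0 = g i := by
          rw [← hpair j0, ← hpair i, hv0, hv1, Finset.pair_comm]
        have hji : j0 = i := hginj this
        subst hji
        exact (hab j0 hv0.symm).elim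
    rintro (_ | ⟨i, x⟩)
    · exact h0
    · rcases fin2_cases' x with rfl | rfl
      · exact (key i).1
      · exact (key i).2



end FG

theorem stmt_19 (n : ℕ) (hn : 2 ≤ n) :
    listDistChromNum (friendshipGraph n) = 1 + ⌈(1 + Real.sqrt (8 * n + 1)) / 2⌉₊ ∧
    distChromNum (friendshipGraph n) = 1 + ⌈(1 + Real.sqrt (8 * n + 1)) / 2⌉₊ := by
  have hs : sval n = ⌈(1 + Real.sqrt (8 * n + 1)) / 2⌉₊ := rfl
  set s := sval n with hsdef
  have hupper : ProperlyListDistinguishable (friendshipGraph n) (s + 1) := FG.upper hn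
  have hlower : ∀ k, ProperlyListDistinguishable (friendshipGraph n) k → s + 1 ≤ k := by
    intro k hk
    by_contra hlt
    push_neg at hlt
    obtain ⟨f, hmem, hf⟩ := hk (fun _ => Finset.range k) (fun _ => Finset.card_range k)
    have h1 := FG.card_bound hn hf (fun v => hmem v)
    have h2 := Nat.choose_le_choose 2 (show k - 1 ≤ s - 1 by omega)
    have h3 : (s - 1).choose 2 < n := choose_lt hn
    omega
  have hlist : listDistChromNum (friendshipGraph n) = s + 1 := by
    unfold listDistChromNum
    apply le_antisymm
    · exact Nat.sInf_le hupper
    · exact le_csInf ⟨s + 1, hupper⟩ (fun k hk => hlower k hk)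
  have hmemdist : (s + 1) ∈ {r | ∃ f : Option (Fin n × Fin 2) → Fin r,
      (∀ ⦃u w⦄, (friendshipGraph n).Adj u w → f u ≠ f w) ∧
      ∀ φ : friendshipGraph n ≃g friendshipGraph n,
        (∀ v, f (φ v) = f v) → ∀ v, φ v = v} := by
    obtain ⟨f, hmem, hproper, hdisting⟩ := hupper (fun _ => Finset.range (s + 1))
      (fun _ => Finset.card_range _)
    refine ⟨fun v => ⟨f v, by simpa using hmem v⟩, ?_, ?_⟩
    · intro u w hadj h
      exact hproper hadj (congrArg Fin.val h)
    · intro φ hφ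
      exact hdisting φ (fun v => congrArg Fin.val (hφ v))
  have hdist : distChromNum (friendshipGraph n) = s + 1 := by
    unfold distChromNum
    apply le_antisymm
    · exact Nat.sInf_le hmemdist
    · apply le_csInf ⟨s + 1, hmemdist⟩
      rintro r ⟨f, hproper, hdisting⟩
      by_contra hlt
      push_neg at hlt
      have hf' : IsProperDistinguishing (friendshipGraph n) (fun v => (f v).val) := by
        refine ⟨?_, ?_⟩
        · intro u w hadj h
          exact hproper hadj (Fin.val_injective h)
        · intro φ hφ
          exact hdisting φ (fun v => Fin.val_injective (hφ v))
      have h1 := FG.card_bound hn hf'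
        (fun v => Finset.mem_range.mpr (f v).isLt)
      have h2 := Nat.choose_le_choose 2 (show r - 1 ≤ s - 1 by omega)
      have h3 : (s - 1).choose 2 < n := choose_lt hn
      omega
  rw [hlist, hdist]
  omega
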